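/- Let K be a field with valuation v : K → Γ ∪ {∞} (Γ a totally ordered abelian additive group), with valuation ring O_v and maximal ideal m_v. Let I be an ideal of the free K-algebra K⟨X⟩ = K⟨X₁,...,Xₙ⟩ generated by a subset G ⊆ O_v⟨X⟩ which is a monic Gröbner basis of I in K⟨X⟩ with respect to a monomial ordering ≺ on B_K, with LM(g) ≠ 1 for all g ∈ G, and endow A = K⟨X⟩/I with the Γ-filtration F^vA given by F^v_γA = { Σ_i λ_i w̄_i : λ_i ∈ F^v_γK, w̄_i ∈ N̄(G) }. Then F^vA is a strong filtration, i.e. F^v_{γ₁}A · F^v_{γ₂}A = F^v_{γ₁+γ₂}A for all γ₁, γ₂ ∈ Γ, and the associated Γ-graded K-algebra G(A) = ⊕_γ F^v_γA/F^v_{<γ}A is strongly Γ-graded, i.e. G(A)_{γ₁} · G(A)_{γ₂} = G(A)_{γ₁+γ₂} for all γ₁, γ₂ ∈ Γ. -/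

import Mathlib

open scoped Classical

/-- Words in the alphabet `X₁,...,Xₙ`: the standard basis `B` of monomials of the free algebra. -/
abbrev Word (n : ℕ) : Type := FreeMonoid (Fin n)

/-- The free `R`-algebra `R⟨X₁,...,Xₙ⟩`, realized as the monoid algebra on words. -/
abbrev FreeAlg (R : Type) [CommRing R] (n : ℕ) : Type := MonoidAlgebra R (Word n)

/-- `v` divides `u` as words: `u = w * v * s` for some words `w, s`. -/
def WordDvd {n : ℕ} (v u : Word n) : Prop := ∃ w s : Word n, u = w * v * s

/-- A monomial ordering on the words in `X₁,...,Xₙ`: a well-ordering `≺` such that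
(M1) `u ≺ v` implies `w*u*s ≺ w*v*s`, and (M2) `w = u*v` implies `u ⪯ w` and `v ⪯ w`. -/
structure MonomialOrdering (n : ℕ) where
  lt : Word n → Word n → Prop
  strictTotal : IsStrictTotalOrder (Word n) lt
  wellFounded : WellFounded lt
  mul_compat : ∀ w u v s : Word n, lt u v → lt (w * u * s) (w * v * s)
  factor_le : ∀ u v : Word n, ¬ lt (u * v) u ∧ ¬ lt (u * v) v

namespace MonomialOrdering

/-- `u ⪯ v` for a monomial ordering. -/
def le {n : ℕ} (o : MonomialOrdering n) (u v : Word n) : Prop := u = v ∨ o.lt u v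

end MonomialOrdering

/-- The leading monomial `LM(f)` of `f`: the `≺`-greatest word occurring in `f`
(with junk value `1` if `f = 0`). -/
noncomputable def LM {R : Type} [CommRing R] {n : ℕ} (o : MonomialOrdering n)
    (f : FreeAlg R n) : Word n :=
  if h : ∃ w, w ∈ f.coeff.support ∧ ∀ u ∈ f.coeff.support, o.le u w then h.choose else 1

/-- The leading coefficient `LC(f)` of `f`: the coefficient of `LM(f)` in `f`. -/
noncomputable def LC {R : Type} [CommRing R] {n : ℕ} (o : MonomialOrdering n)
    (f : FreeAlg R n) : R := f.coeff (LM o f)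

/-- A subset `G` is monic if every `g ∈ G` is nonzero with leading coefficient `1`. -/
def IsMonicSet {R : Type} [CommRing R] {n : ℕ} (o : MonomialOrdering n)
    (G : Set (FreeAlg R n)) : Prop := ∀ g ∈ G, g ≠ 0 ∧ LC o g = 1

/-- `G` is a monic Gröbner basis of the two-sided ideal `I`: a monic subset of `I` such that
the leading monomial of every nonzero `f ∈ I` is divisible by `LM(g)` for some `g ∈ G`. -/
def IsMonicGB {R : Type} [CommRing R] {n : ℕ} (o : MonomialOrdering n)
    (G : Set (FreeAlg R n)) (I : TwoSidedIdeal (FreeAlg R n)) : Prop :=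
  (∀ g ∈ G, g ∈ I) ∧ IsMonicSet o G ∧
    ∀ f : FreeAlg R n, f ∈ I → f ≠ 0 → ∃ g ∈ G, WordDvd (LM o g) (LM o f)

/-- The word `u` viewed as a monomial (with coefficient `1`) of the free algebra. -/
noncomputable def mono (R : Type) [CommRing R] {n : ℕ} (u : Word n) : FreeAlg R n :=
  MonoidAlgebra.single u 1

/-- `f` has a Gröbner representation `f = Σ_{i} λ_i u_i g_i v_i` with
`LM(u_i g_i v_i) ⪯ LM(f)` whenever `λ_i ≠ 0`. -/
def HasGroebnerRep {R : Type} [CommRing R] {n : ℕ} (o : MonomialOrdering n)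
    (G : Set (FreeAlg R n)) (f : FreeAlg R n) : Prop :=
  ∃ (m : ℕ) (lam : Fin m → R) (u v : Fin m → Word n) (g : Fin m → FreeAlg R n),
    (∀ i, g i ∈ G) ∧
    f = ∑ i, lam i • (mono R (u i) * g i * mono R (v i)) ∧
    ∀ i, lam i ≠ 0 → o.le (LM o (mono R (u i) * g i * mono R (v i))) (LM o f)

/-- The set `N(G)` of normal words (mod `G`): words divisible by no `LM(g)`, `g ∈ G`. -/
def NSet {R : Type} [CommRing R] {n : ℕ} (o : MonomialOrdering n)
    (G : Set (FreeAlg R n)) : Set (Word n) :=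
  {u : Word n | ∀ g ∈ G, ¬ WordDvd (LM o g) u}

/-- `f` is a normal element (mod `G`): every word occurring in `f` is normal. -/
def IsNormal {R : Type} [CommRing R] {n : ℕ} (o : MonomialOrdering n)
    (G : Set (FreeAlg R n)) (f : FreeAlg R n) : Prop :=
  ∀ u ∈ f.coeff.support, u ∈ NSet o G

/-- `G` is LM-reduced: `LM(g) ∤ LM(g')` for distinct `g, g' ∈ G`. -/
def LMReduced {R : Type} [CommRing R] {n : ℕ} (o : MonomialOrdering n)
    (G : Set (FreeAlg R n)) : Prop :=
  ∀ g ∈ G, ∀ g' ∈ G, g ≠ g' → ¬ WordDvd (LM o g) (LM o g')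


/-- Axioms (V1)–(V3) for a valuation function on a ring `A` with values in
`Γ ∪ {∞}`, realized as `WithTop Γ`: `v a = ∞` iff `a = 0`; `v (ab) = v a + v b`;
`v (a+b) ≥ min (v a) (v b)`. -/
def IsValuationFn {A : Type} [Ring A] {Γ : Type} [AddCommGroup Γ] [LinearOrder Γ] [IsOrderedAddMonoid Γ]
    (v : A → WithTop Γ) : Prop :=
  (∀ a : A, v a = ⊤ ↔ a = 0) ∧ (∀ a b : A, v (a * b) = v a + v b) ∧
    ∀ a b : A, min (v a) (v b) ≤ v (a + b)

/-- A valuation of a ring `A` (in the sense of O. Schilling): a surjective function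
`v : A → Γ ∪ {∞}` satisfying (V1)–(V3). -/
def IsValuation {A : Type} [Ring A] {Γ : Type} [AddCommGroup Γ] [LinearOrder Γ] [IsOrderedAddMonoid Γ]
    (v : A → WithTop Γ) : Prop :=
  Function.Surjective v ∧ IsValuationFn v

/-- The exhaustive `Γ`-filtration `F^v_γA = {a ∈ A : v a ≥ -γ}` determined by a
valuation `v`. -/
def valFiltration {A : Type} [Ring A] {Γ : Type} [AddCommGroup Γ] [LinearOrder Γ] [IsOrderedAddMonoid Γ]
    (v : A → WithTop Γ) (γ : Γ) : Set A :=
  {a : A | ((-γ : Γ) : WithTop Γ) ≤ v a}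

/-- The statement that the associated `Γ`-graded ring `G(A) = ⊕_γ F_γA/F_{<γ}A` of a
`Γ`-filtration on `A` is a domain.  Since `Γ` is a totally ordered group, `G(A)` is a domain
iff the product of any two nonzero homogeneous elements is nonzero; this is expressed here at
the level of the filtration: whenever `a` represents a nonzero class of `F_γA/F_{<γ}A` and
`b` a nonzero class of `F_τA/F_{<τ}A`, the product `a*b` represents a nonzero class of
`F_{γ+τ}A/F_{<γ+τ}A`. -/
def AssociatedGradedIsDomain {A : Type} [Ring A] {Γ : Type} [AddCommGroup Γ] [LinearOrder Γ] [IsOrderedAddMonoid Γ]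
    (F : Γ → Set A) : Prop :=
  ∀ (γ τ : Γ) (a b : A), a ∈ F γ → (∀ γ' < γ, a ∉ F γ') → b ∈ F τ → (∀ τ' < τ, b ∉ F τ') →
    (a * b ∈ F (γ + τ) ∧ ∀ ρ < γ + τ, a * b ∉ F ρ)

/-- The quotient ring `A = K⟨X₁,...,Xₙ⟩/I` of the free algebra by a two-sided ideal `I`. -/
abbrev QuotAlg {R : Type} [CommRing R] {n : ℕ} (I : TwoSidedIdeal (FreeAlg R n)) : Type :=
  RingQuot (fun a b : FreeAlg R n => a - b ∈ I)

/-- The canonical projection `K⟨X₁,...,Xₙ⟩ → A = K⟨X⟩/I`. -/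
noncomputable def quotProj {R : Type} [CommRing R] {n : ℕ}
    (I : TwoSidedIdeal (FreeAlg R n)) : FreeAlg R n →+* QuotAlg I :=
  RingQuot.mkRingHom (fun a b : FreeAlg R n => a - b ∈ I)

/-- The `Γ`-filtration `F^v_γA = {Σᵢ λᵢ·w̄ᵢ : λᵢ ∈ F^v_γK, w̄ᵢ ∈ N̄(G)}` on `A = K⟨X⟩/I`
induced by a valuation `v` of `K` and the normal words mod `G`:  the additive subgroup of `A`
generated by the classes of the elements `λ·u` with `v λ ≥ -γ` and `u ∈ N(G)`. -/
noncomputable def valInducedFiltration {K : Type} [Field K] {Γ : Type}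
    [AddCommGroup Γ] [LinearOrder Γ] [IsOrderedAddMonoid Γ] (v : K → WithTop Γ) {n : ℕ} (o : MonomialOrdering n)
    (G : Set (FreeAlg K n)) (I : TwoSidedIdeal (FreeAlg K n)) (γ : Γ) :
    AddSubgroup (QuotAlg I) :=
  AddSubgroup.closure
    {x : QuotAlg I | ∃ lam : K, ((-γ : Γ) : WithTop Γ) ≤ v lam ∧ ∃ u ∈ NSet o G,
      x = quotProj I (MonoidAlgebra.single u lam)}

/-!
Reduction modulo the monic set `G` only ever multiplies coefficients by coefficients of elements
of `G`, which lie in `O_v`; so an element of `K⟨X⟩` whose coefficients lie in the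
`O_v`-module `F^v_γK` reduces to a normal form with coefficients in `F^v_γK`, and its class lies in
`F^v_γA`. Applied to the product `(λ u)(μ w) = λμ · uw` of two generators this gives
`F^v_{γ₁}A · F^v_{γ₂}A ⊆ F^v_{γ₁+γ₂}A`. Conversely, `v` is surjective, so some `μ` has
`v μ = -γ₁`, and `λ ū = (μ · 1̄)(μ⁻¹λ · ū)` with `1 ∈ N(G)` because no `LM(g)` is `1`.
The strong grading follows, since every element of `F^v_{γ₁+γ₂}A` is then exactly a sum of
products.
-/

open MonoidAlgebra

theorem AddSubgroup.mul_mem_of_mem_closure {A : Type} [NonUnitalNonAssocRing A] {s t : Set A}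
    {H : AddSubgroup A} (h : ∀ x ∈ s, ∀ y ∈ t, x * y ∈ H) {x y : A}
    (hx : x ∈ AddSubgroup.closure s) (hy : y ∈ AddSubgroup.closure t) : x * y ∈ H := by
  have hleft : ∀ x ∈ s, y ∈ H.comap (AddMonoidHom.mulLeft x) := fun x hx' =>
    (AddSubgroup.closure_le _).2 (fun y hy' => h x hx' y hy') hy
  exact (AddSubgroup.closure_le (K := H.comap (AddMonoidHom.mulRight y))).2 hleft hx

theorem AddSubgroup.exists_fin_sum_mul_of_mem_closure {A : Type} [NonUnitalNonAssocRing A]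
    {S T : AddSubgroup A} {c : A}
    (hc : c ∈ AddSubgroup.closure {x | ∃ a ∈ S, ∃ b ∈ T, x = a * b}) :
    ∃ (m : ℕ) (a b : Fin m → A), (∀ i, a i ∈ S) ∧ (∀ i, b i ∈ T) ∧ c = ∑ i, a i * b i := by
  rw [← Submodule.span_int_eq_addSubgroupClosure] at hc
  obtain ⟨m, k, x, rfl⟩ := Submodule.mem_span_set'.1 hc
  choose a ha b hb hab using fun i => (x i).2
  exact ⟨m, fun i => k i • a i, b, fun i => zsmul_mem (ha i) _, hb, by simp [hab, smul_mul_assoc]⟩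

namespace MonomialOrdering

variable {n : ℕ} (o : MonomialOrdering n)

theorem exists_max {s : Finset (Word n)} (hs : s.Nonempty) : ∃ m ∈ s, ∀ t ∈ s, o.le t m := by
  let _ := o.strictTotal
  let _ := linearOrderOfSTO o.lt
  exact ⟨s.max' hs, s.max'_mem hs, fun t ht => s.le_max' t ht⟩

theorem le_mul_mul {u v : Word n} (w s : Word n) (h : o.le u v) : o.le (w * u * s) (w * v * s) :=
  h.imp (congrArg (w * · * s)) (o.mul_compat w u v s)

end MonomialOrdering

section FreeAlg

variable {R : Type} [CommRing R] {n : ℕ} {o : MonomialOrdering n}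

theorem le_LM {f : FreeAlg R n} {u : Word n} (hu : u ∈ f.coeff.support) : o.le u (LM o f) := by
  have h : ∃ w, w ∈ f.coeff.support ∧ ∀ u ∈ f.coeff.support, o.le u w := o.exists_max ⟨u, hu⟩
  rw [LM, dif_pos h]
  exact h.choose_spec.2 u hu

theorem one_mem_NSet {G : Set (FreeAlg R n)} (hG : ∀ g ∈ G, LM o g ≠ 1) :
    (1 : Word n) ∈ NSet o G := by
  rintro g hg ⟨w, s, h⟩
  exact hG g hg (eq_one_of_mul_left' (eq_one_of_mul_right' h.symm))

theorem coeff_single_mul_mul_single (w u s : Word n) (c : R) (g : FreeAlg R n) :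
    (single w c * g * single s 1).coeff (w * u * s) = c * g.coeff u := by
  rw [coeff_mul_single_mul, coeff_single_mul_mul, mul_one]

theorem support_single_mul_mul_single_subset (w s : Word n) (c : R) (g : FreeAlg R n) :
    (single w c * g * single s 1).coeff.support ⊆ g.coeff.support.image (w * · * s) := by
  grw [support_coeff_mul_single_subset, support_coeff_single_mul_subset, Finset.image_image]
  rfl

end FreeAlg

theorem quotProj_eq_zero {R : Type} [CommRing R] {n : ℕ} {I : TwoSidedIdeal (FreeAlg R n)}
    {q : FreeAlg R n} (hq : q ∈ I) : quotProj I q = 0 := by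
  have h : q - 0 ∈ I := by rwa [sub_zero]
  simpa [quotProj] using RingQuot.mkRingHom_rel (r := fun a b => a - b ∈ I) h

section Reduction

variable {R : Type} [CommRing R] {n : ℕ} (o : MonomialOrdering n) (G : Set (FreeAlg R n))
  (I : TwoSidedIdeal (FreeAlg R n))

noncomputable def normalSpan (S : AddSubgroup R) : AddSubgroup (QuotAlg I) :=
  AddSubgroup.closure {x | ∃ c ∈ S, ∃ u ∈ NSet o G, x = quotProj I (single u c)}

variable {o G I} {S : AddSubgroup R}

theorem quotProj_mem_normalSpan_of_isNormal {f : FreeAlg R n} (hS : ∀ t, f.coeff t ∈ S)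
    (hf : IsNormal o G f) : quotProj I f ∈ normalSpan o G I S := by
  rw [← f.sum_coeff_single, Finsupp.sum, map_sum]
  exact sum_mem fun t ht => AddSubgroup.subset_closure ⟨_, hS t, t, hf t ht, rfl⟩

theorem coeff_single_mul_mul_single_mem (hGS : ∀ g ∈ G, ∀ u, ∀ c ∈ S, c * g.coeff u ∈ S)
    {g : FreeAlg R n} (hg : g ∈ G) (w s : Word n) {c : R} (hc : c ∈ S) (t : Word n) :
    (single w c * g * single s 1).coeff t ∈ S := by
  by_cases ht : t ∈ (single w c * g * single s 1).coeff.support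
  · obtain ⟨u, -, rfl⟩ := Finset.mem_image.1 (support_single_mul_mul_single_subset w s c g ht)
    rw [coeff_single_mul_mul_single]
    exact hGS g hg u c hc
  · rw [Finsupp.notMem_support_iff.1 ht]
    exact zero_mem S

theorem exists_reduct_lt (hGI : ∀ g ∈ G, g ∈ I) (hG : IsMonicSet o G)
    (hGS : ∀ g ∈ G, ∀ u, ∀ c ∈ S, c * g.coeff u ∈ S) {f : FreeAlg R n} (hS : ∀ t, f.coeff t ∈ S)
    {x : Word n} (hx : ∀ t ∈ f.coeff.support, t ∉ NSet o G → o.le t x) :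
    ∃ f' : FreeAlg R n, quotProj I f' = quotProj I f ∧ (∀ t, f'.coeff t ∈ S) ∧
      ∀ t ∈ f'.coeff.support, t ∉ NSet o G → o.lt t x := by
  by_cases hxf : x ∈ f.coeff.support ∧ x ∉ NSet o G
  swap
  · refine ⟨f, rfl, hS, fun t ht htN => (hx t ht htN).resolve_left ?_⟩
    rintro rfl
    exact hxf ⟨ht, htN⟩
  -- Cancel the coefficient of `x = w * LM(g) * s` by `f x • w g s`: the other words of `w g s`
  -- are `≺ x`, and its coefficients stay in `S` by `hGS`.
  obtain ⟨g, hg, w, s, rfl⟩ : ∃ g ∈ G, WordDvd (LM o g) x := by simpa [NSet] using hxf.2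
  set q := single w (f.coeff (w * LM o g * s)) * g * single s 1
  have hq_top : q.coeff (w * LM o g * s) = f.coeff (w * LM o g * s) := by
    rw [coeff_single_mul_mul_single, show g.coeff (LM o g) = 1 from (hG g hg).2, mul_one]
  refine ⟨f - q, ?_,
    fun t => sub_mem (hS t) (coeff_single_mul_mul_single_mem hGS hg w s (hS _) t), ?_⟩
  · rw [map_sub, quotProj_eq_zero (I.mul_mem_right _ _ (I.mul_mem_left _ _ (hGI g hg))), sub_zero]
  · intro t ht htN
    have hne : t ≠ w * LM o g * s := by
      rintro rfl
      simp [hq_top] at ht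
    refine (?_ : o.le t _).resolve_left hne
    rcases Finset.mem_union.1 (Finsupp.support_sub ht) with htf | htq
    · exact hx t htf htN
    · obtain ⟨u, hu, rfl⟩ := Finset.mem_image.1 (support_single_mul_mul_single_subset w s _ g htq)
      exact o.le_mul_mul w s (le_LM hu)

theorem quotProj_mem_normalSpan (hGI : ∀ g ∈ G, g ∈ I) (hG : IsMonicSet o G)
    (hGS : ∀ g ∈ G, ∀ u, ∀ c ∈ S, c * g.coeff u ∈ S) {f : FreeAlg R n} (hS : ∀ t, f.coeff t ∈ S) :
    quotProj I f ∈ normalSpan o G I S := by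
  suffices key : ∀ x f, (∀ t, f.coeff t ∈ S) → (∀ t ∈ f.coeff.support, t ∉ NSet o G → o.le t x) →
      quotProj I f ∈ normalSpan o G I S from
    key (LM o f) f hS fun t ht _ => le_LM ht
  intro x
  induction x using o.wellFounded.induction with
  | _ x ih =>
  intro f hS hx
  obtain ⟨f', hf', hS', hlt⟩ := exists_reduct_lt hGI hG hGS hS hx
  rw [← hf']
  by_cases hN : IsNormal o G f'
  · exact quotProj_mem_normalSpan_of_isNormal hS' hN
  · obtain ⟨m, hm, hmax⟩ := o.exists_max (s := f'.coeff.support.filter (· ∉ NSet o G))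
      (by simpa [IsNormal, Finset.filter_nonempty_iff] using hN)
    rw [Finset.mem_filter] at hm
    exact ih m (hlt m hm.1 hm.2) f' hS' fun t ht htN => hmax t (Finset.mem_filter.2 ⟨ht, htN⟩)

theorem mul_mem_normalSpan (hGI : ∀ g ∈ G, g ∈ I) (hG : IsMonicSet o G) {T U : AddSubgroup R}
    (hGU : ∀ g ∈ G, ∀ u, ∀ c ∈ U, c * g.coeff u ∈ U) (hST : ∀ a ∈ S, ∀ b ∈ T, a * b ∈ U)
    {x y : QuotAlg I} (hx : x ∈ normalSpan o G I S) (hy : y ∈ normalSpan o G I T) :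
    x * y ∈ normalSpan o G I U := by
  refine AddSubgroup.mul_mem_of_mem_closure ?_ hx hy
  rintro _ ⟨a, ha, u, -, rfl⟩ _ ⟨b, hb, w, -, rfl⟩
  rw [← map_mul, single_mul_single]
  refine quotProj_mem_normalSpan hGI hG hGU fun t => ?_
  rw [coeff_single, Finsupp.single_apply]
  split_ifs
  exacts [hST a ha b hb, zero_mem U]

end Reduction

namespace IsValuationFn

variable {A : Type} [Ring A] {Γ : Type} [AddCommGroup Γ] [LinearOrder Γ] [IsOrderedAddMonoid Γ]
  {v : A → WithTop Γ}

theorem map_one [Nontrivial A] (hv : IsValuationFn v) : v 1 = 0 := by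
  have h : v 1 + v 1 = v 1 + 0 := by rw [← hv.2.1, one_mul, add_zero]
  exact WithTop.add_left_cancel ((hv.1 1).not.2 one_ne_zero) h

def toAddValuation [Nontrivial A] (hv : IsValuationFn v) : AddValuation A (WithTop Γ) :=
  AddValuation.of v ((hv.1 0).2 rfl) hv.map_one hv.2.2 hv.2.1

theorem mul_mem_valFiltration (hv : IsValuationFn v) {a b : A} {γ δ : Γ}
    (ha : a ∈ valFiltration v γ) (hb : b ∈ valFiltration v δ) :
    a * b ∈ valFiltration v (γ + δ) := by
  change ((-(γ + δ) : Γ) : WithTop Γ) ≤ v (a * b)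
  rw [hv.2.1, neg_add, WithTop.coe_add]
  exact add_le_add ha hb

end IsValuationFn

def valFiltrationAddSubgroup {A : Type} [Ring A] {Γ : Type} [AddCommGroup Γ] [LinearOrder Γ]
    [IsOrderedAddMonoid Γ] (v : AddValuation A (WithTop Γ)) (γ : Γ) : AddSubgroup A where
  carrier := valFiltration v γ
  zero_mem' := by simp [valFiltration]
  add_mem' ha hb := (le_min ha hb).trans (v.map_add _ _)
  neg_mem' ha := by rwa [valFiltration, Set.mem_ofPred_eq, v.map_neg]

section InducedFiltration

variable {K : Type} [Field K] {Γ : Type} [AddCommGroup Γ] [LinearOrder Γ] [IsOrderedAddMonoid Γ]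
  {v : K → WithTop Γ} {n : ℕ} {o : MonomialOrdering n} {G : Set (FreeAlg K n)}
  {I : TwoSidedIdeal (FreeAlg K n)}

theorem valInducedFiltration_eq_normalSpan (hv : IsValuationFn v) (γ : Γ) :
    valInducedFiltration v o G I γ =
      normalSpan o G I (valFiltrationAddSubgroup hv.toAddValuation γ) :=
  rfl

theorem mul_mem_valInducedFiltration (hv : IsValuationFn v)
    (hGO : ∀ g ∈ G, ∀ u : Word n, (0 : WithTop Γ) ≤ v (g.coeff u)) (hGB : IsMonicGB o G I)
    {γ₁ γ₂ : Γ} {a b : QuotAlg I} (ha : a ∈ valInducedFiltration v o G I γ₁)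
    (hb : b ∈ valInducedFiltration v o G I γ₂) :
    a * b ∈ valInducedFiltration v o G I (γ₁ + γ₂) := by
  rw [valInducedFiltration_eq_normalSpan hv] at ha hb ⊢
  refine mul_mem_normalSpan hGB.1 hGB.2.1 (fun g hg u c hc => ?_)
    (fun a ha b hb => hv.mul_mem_valFiltration ha hb) ha hb
  have hg0 : g.coeff u ∈ valFiltration v 0 := by simpa [valFiltration] using hGO g hg u
  have := hv.mul_mem_valFiltration hc hg0
  rwa [add_zero] at this

theorem valInducedFiltration_add_le_closure_mul (hv : IsValuation v) (hLM1 : ∀ g ∈ G, LM o g ≠ 1)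
    (γ₁ γ₂ : Γ) :
    valInducedFiltration v o G I (γ₁ + γ₂) ≤ AddSubgroup.closure
      {x | ∃ a ∈ valInducedFiltration v o G I γ₁,
        ∃ b ∈ valInducedFiltration v o G I γ₂, x = a * b} := by
  obtain ⟨hsurj, hvf⟩ := hv
  rw [valInducedFiltration, AddSubgroup.closure_le]
  rintro _ ⟨c, hc, u, hu, rfl⟩
  obtain ⟨μ, hμ⟩ := hsurj ((-γ₁ : Γ) : WithTop Γ)
  have hμ0 : μ ≠ 0 := fun h => WithTop.coe_ne_top (hμ.symm.trans ((hvf.1 μ).2 h))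
  have hμinv : μ⁻¹ ∈ valFiltration v (-γ₁) := by
    change ((-(-γ₁) : Γ) : WithTop Γ) ≤ v μ⁻¹
    rw [show v μ⁻¹ = -v μ from hvf.toAddValuation.map_inv, hμ]
    rfl
  refine AddSubgroup.subset_closure ⟨quotProj I (single 1 μ),
    AddSubgroup.subset_closure ⟨μ, hμ.ge, 1, one_mem_NSet hLM1, rfl⟩,
    quotProj I (single u (μ⁻¹ * c)), AddSubgroup.subset_closure ⟨μ⁻¹ * c, ?_, u, hu, rfl⟩, ?_⟩
  · have := hvf.mul_mem_valFiltration hμinv hc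
    rwa [neg_add_cancel_left] at this
  · rw [← map_mul, single_mul_single, one_mul, mul_inv_cancel_left₀ hμ0]

theorem closure_mul_valInducedFiltration (hv : IsValuation v)
    (hGO : ∀ g ∈ G, ∀ u : Word n, (0 : WithTop Γ) ≤ v (g.coeff u)) (hGB : IsMonicGB o G I)
    (hLM1 : ∀ g ∈ G, LM o g ≠ 1) (γ₁ γ₂ : Γ) :
    AddSubgroup.closure
        {x | ∃ a ∈ valInducedFiltration v o G I γ₁,
          ∃ b ∈ valInducedFiltration v o G I γ₂, x = a * b} =
      valInducedFiltration v o G I (γ₁ + γ₂) :=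
  le_antisymm
    ((AddSubgroup.closure_le _).2 fun _ ⟨_, ha, _, hb, hab⟩ =>
      hab ▸ mul_mem_valInducedFiltration hv.2 hGO hGB ha hb)
    (valInducedFiltration_add_le_closure_mul hv hLM1 γ₁ γ₂)

end InducedFiltration

theorem induced_filtration_strong_general {K : Type} [Field K] {Γ : Type}
    [AddCommGroup Γ] [LinearOrder Γ] [IsOrderedAddMonoid Γ] (v : K → WithTop Γ) (hv : IsValuation v) {n : ℕ}
    (o : MonomialOrdering n) (G : Set (FreeAlg K n)) (I : TwoSidedIdeal (FreeAlg K n))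
    (hGO : ∀ g ∈ G, ∀ u : Word n, (0 : WithTop Γ) ≤ v (g.coeff u))
    (hGB : IsMonicGB o G I)
    (hLM1 : ∀ g ∈ G, LM o g ≠ 1) :
    (∀ γ₁ γ₂ : Γ,
      AddSubgroup.closure
        {x : QuotAlg I | ∃ a ∈ valInducedFiltration v o G I γ₁,
          ∃ b ∈ valInducedFiltration v o G I γ₂, x = a * b} =
        valInducedFiltration v o G I (γ₁ + γ₂)) ∧
    (∀ γ₁ γ₂ : Γ, ∀ c ∈ valInducedFiltration v o G I (γ₁ + γ₂),
      ∃ (m : ℕ) (a b : Fin m → QuotAlg I),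
        (∀ i, a i ∈ valInducedFiltration v o G I γ₁) ∧
        (∀ i, b i ∈ valInducedFiltration v o G I γ₂) ∧
        (c - ∑ i, a i * b i = 0 ∨
          ∃ ρ < γ₁ + γ₂, c - ∑ i, a i * b i ∈ valInducedFiltration v o G I ρ)) := by
  refine ⟨closure_mul_valInducedFiltration hv hGO hGB hLM1, fun γ₁ γ₂ c hc => ?_⟩
  rw [← closure_mul_valInducedFiltration hv hGO hGB hLM1] at hc
  obtain ⟨m, a, b, ha, hb, rfl⟩ := AddSubgroup.exists_fin_sum_mul_of_mem_closure hc
  exact ⟨m, a, b, ha, hb, Or.inl (sub_self _)⟩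

/-- **Theorem 6.3 (iv).**  Let `K` be a field with a valuation `v : K → Γ ∪ {∞}`, with
valuation ring `O_v = {λ : v λ ≥ 0}`, and let `I` be an ideal of `K⟨X₁,...,Xₙ⟩` generated by
a subset `G ⊆ O_v⟨X⟩` which is a monic Gröbner basis of `I` in `K⟨X⟩` with `LM(g) ≠ 1` for
all `g ∈ G`.  Endow `A = K⟨X⟩/I` with the filtration
`F^v_γA = {Σ λᵢ w̄ᵢ : v λᵢ ≥ -γ, w̄ᵢ ∈ N̄(G)}`.  Then `F^vA` is a strong filtration, i.e.
`F^v_{γ₁}A · F^v_{γ₂}A = F^v_{γ₁+γ₂}A` for all `γ₁, γ₂` (the left side being the additive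
subgroup generated by the products), and the associated graded algebra `G(A)` is strongly
`Γ`-graded: every element of `G(A)_{γ₁+γ₂} = F^v_{γ₁+γ₂}A/F^v_{<γ₁+γ₂}A` is a sum of
products of elements of `G(A)_{γ₁}` and `G(A)_{γ₂}`. -/
theorem induced_filtration_strong {K : Type} [Field K] {Γ : Type}
    [AddCommGroup Γ] [LinearOrder Γ] [IsOrderedAddMonoid Γ] (v : K → WithTop Γ) (hv : IsValuation v) {n : ℕ}
    (o : MonomialOrdering n) (G : Set (FreeAlg K n)) (I : TwoSidedIdeal (FreeAlg K n))
    (hGO : ∀ g ∈ G, ∀ u : Word n, (0 : WithTop Γ) ≤ v (g.coeff u))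
    (hgen : I = TwoSidedIdeal.span G) (hGB : IsMonicGB o G I)
    (hLM1 : ∀ g ∈ G, LM o g ≠ 1) :
    (∀ γ₁ γ₂ : Γ,
      AddSubgroup.closure
        {x : QuotAlg I | ∃ a ∈ valInducedFiltration v o G I γ₁,
          ∃ b ∈ valInducedFiltration v o G I γ₂, x = a * b} =
        valInducedFiltration v o G I (γ₁ + γ₂)) ∧
    (∀ γ₁ γ₂ : Γ, ∀ c ∈ valInducedFiltration v o G I (γ₁ + γ₂),
      ∃ (m : ℕ) (a b : Fin m → QuotAlg I),
        (∀ i, a i ∈ valInducedFiltration v o G I γ₁) ∧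
        (∀ i, b i ∈ valInducedFiltration v o G I γ₂) ∧
        (c - ∑ i, a i * b i = 0 ∨
          ∃ ρ < γ₁ + γ₂, c - ∑ i, a i * b i ∈ valInducedFiltration v o G I ρ)) :=
  induced_filtration_strong_general v hv o G I hGO hGB hLM1
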